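/- Let W, H be positive integers, let λ ∈ (0,1), let h_λ be the leaky ReLU applied entrywise, and let F denote the two-dimensional discrete Fourier transform with ‖·‖ the Frobenius norm and ∗ the Hadamard product. Let w₁, w₂, n, δ, x : (ZMod W) × (ZMod H) → ℝ be real matrices, set W₁ = F(w₁), W₂ = F(w₂), Δ = F(δ), X = F(x), and let y = w₁ ⊛ x be the circular convolution. Then ‖W₁ ∗ Δ + W₁ ∗ W₂ ∗ F(h_λ ∘ y)‖ ≤ ‖W₁‖·‖Δ‖ + ‖W₁‖²·‖W₂‖·‖X‖. -/

import Mathlib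

open Finset

/-- Leaky ReLU with slope `lam`. -/
noncomputable def lrelu (lam : ℝ) (t : ℝ) : ℝ := if 0 < t then t else lam * t

/-- Two-dimensional discrete Fourier transform of a complex matrix indexed by
`ZMod W × ZMod H`. -/
noncomputable def dft2 {W H : ℕ} [NeZero W] [NeZero H]
    (x : ZMod W × ZMod H → ℂ) : ZMod W × ZMod H → ℂ :=
  fun k => ∑ m : ZMod W × ZMod H,
    x m * Complex.exp
      (((-(2 * Real.pi * ((m.1.val * k.1.val : ℝ) / (W : ℝ) +
          (m.2.val * k.2.val : ℝ) / (H : ℝ)))) : ℝ) * Complex.I)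

/-- Circular (cyclic) convolution of two real matrices indexed by `ZMod W × ZMod H`. -/
noncomputable def cconv {W H : ℕ} [NeZero W] [NeZero H]
    (w x : ZMod W × ZMod H → ℝ) : ZMod W × ZMod H → ℝ :=
  fun m => ∑ p : ZMod W × ZMod H, w p * x (m.1 - p.1, m.2 - p.2)

/-- Frobenius norm of a finitely indexed family of complex numbers. -/
noncomputable def frob {ι : Type*} [Fintype ι] (X : ι → ℂ) : ℝ :=
  Real.sqrt (∑ i, ‖X i‖ ^ 2)

/-- Entrywise complexification of a real matrix. -/
def toC {α : Type*} (x : α → ℝ) : α → ℂ := fun i => (x i : ℂ)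

/-! ### Auxiliary development: roots of unity, characters, Parseval, convolution theorem -/

noncomputable def zet (n : ℕ) : ℂ := Complex.exp (-(2 * Real.pi / n) * Complex.I)

lemma zet_prim (n : ℕ) [NeZero n] : IsPrimitiveRoot (zet n) n := by
  have h := Complex.isPrimitiveRoot_exp n (NeZero.ne n)
  have : zet n = (Complex.exp (2 * Real.pi * Complex.I / n))⁻¹ := by
    rw [← Complex.exp_neg]; unfold zet; ring_nf
  rw [this]; exact h.inv

lemma zet_pow_n (n : ℕ) [NeZero n] : zet n ^ n = 1 :=
  ((zet_prim n).pow_eq_one_iff_dvd n).mpr dvd_rfl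

lemma zet_pow_mod (n : ℕ) [NeZero n] (j : ℕ) : zet n ^ j = zet n ^ (j % n) := by
  conv_lhs => rw [← Nat.div_add_mod j n]
  rw [pow_add, pow_mul, zet_pow_n, one_pow, one_mul]

lemma zet_pow_congr (n : ℕ) [NeZero n] {j j' : ℕ} (h : j ≡ j' [MOD n]) :
    zet n ^ j = zet n ^ j' := by
  rw [zet_pow_mod, h, ← zet_pow_mod]

noncomputable def e1 (n : ℕ) (a k : ZMod n) : ℂ := zet n ^ (a.val * k.val)

lemma e1_add (n : ℕ) [NeZero n] (a b k : ZMod n) :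
    e1 n (a + b) k = e1 n a k * e1 n b k := by
  unfold e1
  rw [← pow_add, ← add_mul]
  exact zet_pow_congr n (Nat.ModEq.mul_right _ (by rw [ZMod.val_add]; exact (Nat.mod_modEq _ n)))

lemma e1_zero (n : ℕ) [NeZero n] (k : ZMod n) : e1 n 0 k = 1 := by
  simp [e1, ZMod.val_zero]

lemma e1_conj (n : ℕ) [NeZero n] (a k : ZMod n) :
    (starRingEnd ℂ) (e1 n a k) = e1 n (-a) k := by
  have h1 : e1 n (-a) k * e1 n a k = 1 := by rw [← e1_add, neg_add_cancel, e1_zero]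
  have hz : (starRingEnd ℂ) (zet n) * zet n = 1 := by
    unfold zet
    rw [← Complex.exp_conj, ← Complex.exp_add]
    have hc : (starRingEnd ℂ) (-(2 * (Real.pi : ℂ) / n) * Complex.I)
        = (2 * (Real.pi : ℂ) / n) * Complex.I := by
      simp only [map_mul, map_neg, map_div₀, Complex.conj_I, Complex.conj_ofReal,
        map_ofNat, map_natCast]
      ring
    rw [hc, ← Complex.exp_zero]
    ring_nf
  have h2 : (starRingEnd ℂ) (e1 n a k) * e1 n a k = 1 := by
    unfold e1
    rw [map_pow, ← mul_pow, hz, one_pow]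
  exact (eq_inv_of_mul_eq_one_left h2).trans (eq_inv_of_mul_eq_one_left h1).symm

lemma zmod_sum_eq {n : ℕ} [NeZero n] (f : ZMod n → ℂ) :
    ∑ k : ZMod n, f k = ∑ i ∈ range n, f (i : ZMod n) := by
  refine Finset.sum_nbij' (fun k => k.val) (fun i => (i : ZMod n)) ?_ ?_ ?_ ?_ ?_
  · intro a _; simpa using ZMod.val_lt a
  · intro a _; simp
  · intro a _; exact ZMod.natCast_rightInverse a
  · intro a ha; exact ZMod.val_cast_of_lt (mem_range.mp ha)
  · intro a _; rw [ZMod.natCast_rightInverse a]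

lemma e1_sum (n : ℕ) [NeZero n] (a : ZMod n) :
    ∑ k : ZMod n, e1 n a k = if a = 0 then (n : ℂ) else 0 := by
  split_ifs with h
  · subst h; simp [e1_zero, Finset.card_univ]
  · have hsum : ∑ k : ZMod n, e1 n a k = ∑ i ∈ range n, (zet n ^ a.val) ^ i := by
      rw [zmod_sum_eq]
      refine Finset.sum_congr rfl fun i hi => ?_
      unfold e1
      rw [ZMod.val_cast_of_lt (mem_range.mp hi), pow_mul]
    have hne : zet n ^ a.val ≠ 1 := by
      intro h1
      have hdvd := ((zet_prim n).pow_eq_one_iff_dvd a.val).mp h1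
      have hlt := ZMod.val_lt a
      have hpos : 0 < a.val :=
        Nat.pos_of_ne_zero (fun h0 => h ((ZMod.val_eq_zero a).mp h0))
      exact absurd (Nat.le_of_dvd hpos hdvd) (not_le.mpr hlt)
    rw [hsum, geom_sum_eq hne, ← pow_mul, mul_comm a.val n, pow_mul, zet_pow_n, one_pow]
    simp

noncomputable def E2 (W H : ℕ) (m k : ZMod W × ZMod H) : ℂ :=
  e1 W m.1 k.1 * e1 H m.2 k.2

lemma dft2_eq {W H : ℕ} [NeZero W] [NeZero H] (z : ZMod W × ZMod H → ℂ)
    (k : ZMod W × ZMod H) : dft2 z k = ∑ m, z m * E2 W H m k := by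
  unfold dft2 E2 e1 zet
  refine Finset.sum_congr rfl fun m _ => ?_
  rw [← Complex.exp_nat_mul, ← Complex.exp_nat_mul, ← Complex.exp_add]
  congr 1
  push_cast
  ring

lemma E2_add {W H : ℕ} [NeZero W] [NeZero H] (m p k : ZMod W × ZMod H) :
    E2 W H (m + p) k = E2 W H m k * E2 W H p k := by
  unfold E2
  rw [Prod.fst_add, Prod.snd_add, e1_add, e1_add]
  ring

lemma E2_conj {W H : ℕ} [NeZero W] [NeZero H] (m k : ZMod W × ZMod H) :
    (starRingEnd ℂ) (E2 W H m k) = E2 W H (-m) k := by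
  unfold E2
  rw [map_mul, e1_conj, e1_conj]; rfl

lemma E2_sum {W H : ℕ} [NeZero W] [NeZero H] (m : ZMod W × ZMod H) :
    ∑ k : ZMod W × ZMod H, E2 W H m k = if m = 0 then ((W * H : ℕ) : ℂ) else 0 := by
  unfold E2
  rw [Fintype.sum_prod_type, ← Finset.sum_mul_sum, e1_sum, e1_sum]
  by_cases h1 : m.1 = 0 <;> by_cases h2 : m.2 = 0 <;>
    simp [h1, h2, Prod.ext_iff]

/-- Parseval's identity for `dft2`. -/
lemma parseval {W H : ℕ} [NeZero W] [NeZero H] (z : ZMod W × ZMod H → ℂ) :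
    ∑ k, ‖dft2 z k‖ ^ 2 = (W * H : ℕ) * ∑ m, ‖z m‖ ^ 2 := by
  have key : ∑ k, dft2 z k * (starRingEnd ℂ) (dft2 z k)
      = ((W * H : ℕ) : ℂ) * ∑ m, z m * (starRingEnd ℂ) (z m) := by
    have expand : ∀ k, dft2 z k * (starRingEnd ℂ) (dft2 z k)
        = ∑ m, ∑ p, (z m * (starRingEnd ℂ) (z p)) * (E2 W H m k * E2 W H (-p) k) := by
      intro k
      rw [dft2_eq, map_sum, Finset.sum_mul_sum]
      refine Finset.sum_congr rfl fun m _ => Finset.sum_congr rfl fun p _ => ?_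
      rw [map_mul, E2_conj]
      ring
    calc ∑ k, dft2 z k * (starRingEnd ℂ) (dft2 z k)
        = ∑ k, ∑ m, ∑ p, (z m * (starRingEnd ℂ) (z p)) * (E2 W H (m + -p) k) := by
          refine Finset.sum_congr rfl fun k _ => ?_
          rw [expand k]
          exact Finset.sum_congr rfl fun m _ => Finset.sum_congr rfl fun p _ => by
            rw [E2_add]
      _ = ∑ m, ∑ p, (z m * (starRingEnd ℂ) (z p)) * ∑ k, E2 W H (m + -p) k := by
          rw [Finset.sum_comm]
          refine Finset.sum_congr rfl fun m _ => ?_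
          rw [Finset.sum_comm]
          exact Finset.sum_congr rfl fun p _ => by rw [Finset.mul_sum]
      _ = ∑ m, (z m * (starRingEnd ℂ) (z m)) * ((W * H : ℕ) : ℂ) := by
          refine Finset.sum_congr rfl fun m _ => ?_
          rw [Finset.sum_eq_single m]
          · rw [E2_sum, if_pos (by simp)]
          · intro p _ hp
            rw [E2_sum, if_neg (by
              intro hc
              exact hp (by rwa [add_neg_eq_zero, eq_comm] at hc)), mul_zero]
          · intro hm; exact absurd (Finset.mem_univ m) hm
      _ = ((W * H : ℕ) : ℂ) * ∑ m, z m * (starRingEnd ℂ) (z m) := by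
          rw [Finset.mul_sum]
          exact Finset.sum_congr rfl fun m _ => by ring
  have habs : ∀ (u : ℂ), ‖u‖ ^ 2 = (u * (starRingEnd ℂ) u).re := by
    intro u
    rw [Complex.mul_conj, Complex.sq_norm]
    simp
  calc ∑ k, ‖dft2 z k‖ ^ 2
      = (∑ k, dft2 z k * (starRingEnd ℂ) (dft2 z k)).re := by
        rw [Complex.re_sum]; exact Finset.sum_congr rfl fun k _ => habs _
    _ = (((W * H : ℕ) : ℂ) * ∑ m, z m * (starRingEnd ℂ) (z m)).re := by rw [key]
    _ = (W * H : ℕ) * ∑ m, ‖z m‖ ^ 2 := by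
        rw [Complex.mul_re]
        simp only [Complex.natCast_re, Complex.natCast_im, zero_mul, sub_zero]
        congr 1
        rw [Complex.re_sum]
        exact Finset.sum_congr rfl fun m _ => (habs _).symm

/-- Convolution theorem for `dft2`. -/
lemma conv_thm {W H : ℕ} [NeZero W] [NeZero H] (w x : ZMod W × ZMod H → ℝ)
    (k : ZMod W × ZMod H) :
    dft2 (toC (cconv w x)) k = dft2 (toC w) k * dft2 (toC x) k := by
  rw [dft2_eq, dft2_eq, dft2_eq]
  have lhs_eq : ∑ m, toC (cconv w x) m * E2 W H m k
      = ∑ m, ∑ p, ((w p : ℂ) * (x (m - p) : ℂ)) * E2 W H m k := by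
    refine Finset.sum_congr rfl fun m _ => ?_
    unfold toC cconv
    push_cast
    rw [Finset.sum_mul]
    refine Finset.sum_congr rfl fun p _ => ?_
    congr 2
  rw [lhs_eq, Finset.sum_comm, Finset.sum_mul_sum]
  refine Finset.sum_congr rfl fun p _ => ?_
  rw [← Equiv.sum_comp (Equiv.addRight p) (fun m => ((w p : ℂ) * (x (m - p) : ℂ)) * E2 W H m k)]
  refine Finset.sum_congr rfl fun m _ => ?_
  simp only [Equiv.coe_addRight, add_sub_cancel_right]
  rw [E2_add]
  unfold toC
  ring

/-- `frob` as a Euclidean norm: triangle inequality. -/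
lemma frob_add_le {ι : Type*} [Fintype ι] (f g : ι → ℂ) :
    frob (fun i => f i + g i) ≤ frob f + frob g := by
  have he : ∀ h : ι → ℂ, frob h = ‖(WithLp.equiv 2 (ι → ℂ)).symm h‖ := by
    intro h
    rw [EuclideanSpace.norm_eq]
    rfl
  rw [he, he, he]
  exact norm_add_le _ _

lemma frob_nonneg {ι : Type*} [Fintype ι] (f : ι → ℂ) : 0 ≤ frob f :=
  Real.sqrt_nonneg _

lemma frob_mono {ι : Type*} [Fintype ι] {f g : ι → ℂ}
    (h : ∀ i, ‖f i‖ ≤ ‖g i‖) : frob f ≤ frob g := by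
  refine Real.sqrt_le_sqrt (Finset.sum_le_sum fun i _ => ?_)
  exact pow_le_pow_left₀ (norm_nonneg _) (h i) 2

lemma abs_le_frob {ι : Type*} [Fintype ι] (f : ι → ℂ) (i : ι) :
    ‖f i‖ ≤ frob f := by
  have h1 : ‖f i‖ ^ 2 ≤ ∑ j, ‖f j‖ ^ 2 :=
    Finset.single_le_sum (f := fun j => ‖f j‖ ^ 2)
      (fun j _ => sq_nonneg _) (Finset.mem_univ i)
  have := Real.sqrt_le_sqrt h1
  rwa [Real.sqrt_sq (norm_nonneg _)] at this

/-- Hadamard product bound. -/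
lemma frob_hadamard_le {ι : Type*} [Fintype ι] (f g : ι → ℂ) :
    frob (fun i => f i * g i) ≤ frob f * frob g := by
  have h : frob (fun i => f i * g i) ^ 2 ≤ (frob f * frob g) ^ 2 := by
    have hf : frob (fun i => f i * g i) ^ 2 = ∑ i, (‖f i‖ * ‖g i‖) ^ 2 := by
      unfold frob
      rw [Real.sq_sqrt (Finset.sum_nonneg fun i _ => sq_nonneg _)]
      exact Finset.sum_congr rfl fun i _ => by rw [norm_mul]
    rw [hf, mul_pow]
    have : frob g ^ 2 = ∑ i, ‖g i‖ ^ 2 :=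
      Real.sq_sqrt (Finset.sum_nonneg fun i _ => sq_nonneg _)
    rw [this, Finset.mul_sum]
    refine Finset.sum_le_sum fun i _ => ?_
    rw [mul_pow]
    refine mul_le_mul_of_nonneg_right ?_ (sq_nonneg _)
    have := abs_le_frob f i
    exact pow_le_pow_left₀ (norm_nonneg _) this 2
  have h2 := Real.sqrt_le_sqrt h
  rwa [Real.sqrt_sq (frob_nonneg _), Real.sqrt_sq
    (mul_nonneg (frob_nonneg _) (frob_nonneg _))] at h2

lemma lrelu_abs_le (lam : ℝ) (hlam : lam ∈ Set.Ioo (0 : ℝ) 1) (t : ℝ) :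
    |lrelu lam t| ≤ |t| := by
  unfold lrelu
  split_ifs with h
  · exact le_rfl
  · rw [abs_mul]
    calc |lam| * |t| ≤ 1 * |t| := by
          refine mul_le_mul_of_nonneg_right ?_ (abs_nonneg t)
          rw [abs_of_pos hlam.1]
          exact le_of_lt hlam.2
      _ = |t| := one_mul _

/-- Bound on the one-step deviation term of the IFF recursion in the Fourier domain:
`‖W₁ ∗ Δ + W₁ ∗ W₂ ∗ F(h_λ ∘ y)‖ ≤ ‖W₁‖‖Δ‖ + ‖W₁‖²‖W₂‖‖X‖`, where `y = w₁ ⊛ x`. -/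
theorem iff_step_bound (W H : ℕ) [NeZero W] [NeZero H]
    (lam : ℝ) (hlam : lam ∈ Set.Ioo (0 : ℝ) 1)
    (w₁ w₂ n δ x : ZMod W × ZMod H → ℝ) :
    frob (fun k =>
        dft2 (toC w₁) k * dft2 (toC δ) k +
        dft2 (toC w₁) k * dft2 (toC w₂) k *
          dft2 (toC (fun i => lrelu lam (cconv w₁ x i))) k) ≤
      frob (dft2 (toC w₁)) * frob (dft2 (toC δ)) +
        frob (dft2 (toC w₁)) ^ 2 * frob (dft2 (toC w₂)) * frob (dft2 (toC x)) := by
  set A := dft2 (toC w₁)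
  set B := dft2 (toC δ)
  set C := dft2 (toC w₂)
  set X := dft2 (toC x)
  set D := dft2 (toC (fun i => lrelu lam (cconv w₁ x i)))
  -- key: frob D ≤ frob A * frob X
  have hD : frob D ≤ frob A * frob X := by
    have hD2 : frob D ^ 2 ≤ (frob A * frob X) ^ 2 := by
      have hfD : frob D ^ 2 = ∑ k, ‖D k‖ ^ 2 :=
        Real.sq_sqrt (Finset.sum_nonneg fun i _ => sq_nonneg _)
      have hDr := parseval (toC (fun i => lrelu lam (cconv w₁ x i)))
      have hyr := parseval (toC (cconv w₁ x))
      -- ∑ |h(y)|² ≤ ∑ |y|²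
      have hcmp : ∑ m, ‖toC (fun i => lrelu lam (cconv w₁ x i)) m‖ ^ 2
          ≤ ∑ m, ‖toC (cconv w₁ x) m‖ ^ 2 := by
        refine Finset.sum_le_sum fun m _ => ?_
        unfold toC
        rw [Complex.norm_real, Complex.norm_real, Real.norm_eq_abs, Real.norm_eq_abs]
        exact pow_le_pow_left₀ (abs_nonneg _) (lrelu_abs_le lam hlam _) 2
      have step1 : frob D ^ 2 ≤ ∑ k, ‖dft2 (toC (cconv w₁ x)) k‖ ^ 2 := by
        rw [hfD, hDr, hyr]
        exact mul_le_mul_of_nonneg_left hcmp (Nat.cast_nonneg _)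
      have step2 : ∑ k, ‖dft2 (toC (cconv w₁ x)) k‖ ^ 2
          = ∑ k, ‖A k * X k‖ ^ 2 := by
        refine Finset.sum_congr rfl fun k _ => ?_
        rw [conv_thm]
      have step3 : ∑ k, ‖A k * X k‖ ^ 2 ≤ (frob A * frob X) ^ 2 := by
        have := frob_hadamard_le A X
        have h4 : frob (fun k => A k * X k) ^ 2 = ∑ k, ‖A k * X k‖ ^ 2 :=
          Real.sq_sqrt (Finset.sum_nonneg fun i _ => sq_nonneg _)
        rw [← h4]
        exact pow_le_pow_left₀ (frob_nonneg _) this 2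
      calc frob D ^ 2 ≤ ∑ k, ‖dft2 (toC (cconv w₁ x)) k‖ ^ 2 := step1
        _ = ∑ k, ‖A k * X k‖ ^ 2 := step2
        _ ≤ (frob A * frob X) ^ 2 := step3
    have := Real.sqrt_le_sqrt hD2
    rwa [Real.sqrt_sq (frob_nonneg _), Real.sqrt_sq
      (mul_nonneg (frob_nonneg _) (frob_nonneg _))] at this
  calc frob (fun k => A k * B k + A k * C k * D k)
      ≤ frob (fun k => A k * B k) + frob (fun k => A k * C k * D k) :=
        frob_add_le _ _
    _ ≤ frob A * frob B + frob A * frob C * frob D := by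
        refine add_le_add (frob_hadamard_le A B) ?_
        calc frob (fun k => A k * C k * D k)
            ≤ frob (fun k => A k * C k) * frob D := frob_hadamard_le _ _
          _ ≤ (frob A * frob C) * frob D :=
              mul_le_mul_of_nonneg_right (frob_hadamard_le A C) (frob_nonneg _)
    _ ≤ frob A * frob B + frob A ^ 2 * frob C * frob X := by
        refine add_le_add (le_refl _) ?_
        calc frob A * frob C * frob D ≤ frob A * frob C * (frob A * frob X) :=
              mul_le_mul_of_nonneg_left hD (mul_nonneg (frob_nonneg _) (frob_nonneg _))
          _ = frob A ^ 2 * frob C * frob X := by ring
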